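/- In the braid group B₃ with presentation Gp⟨a, b, c | a³ = b² = c⟩, the rewriting system R = { a⁻¹ → c⁻¹a², b⁻¹ → c⁻¹b, a³ → c, b² → c, ac → ca, ac⁻¹ → c⁻¹a, bc → cb, bc⁻¹ → c⁻¹b, cc⁻¹ → 1, c⁻¹c → 1 } is locally confluent: every critical pair arising from overlap or inclusion ambiguities among these rules resolves. -/

import Mathlib

open Relation

/-- One-step reduction of the string rewriting system `R`. -/
def RWStep {α : Type*} (R : Set (List α × List α)) (u v : List α) : Prop :=
  ∃ a l r b, (l, r) ∈ R ∧ u = a ++ l ++ b ∧ v = a ++ r ++ b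

/-- `R` is terminating: there is no infinite sequence of one-step reductions. -/
def RWTerminating {α : Type*} (R : Set (List α × List α)) : Prop :=
  ¬ ∃ f : ℕ → List α, ∀ n, RWStep R (f n) (f (n + 1))

/-- A word is irreducible if no one-step reduction applies to it. -/
def RWIrred {α : Type*} (R : Set (List α × List α)) (w : List α) : Prop :=
  ¬ ∃ z, RWStep R w z


/-- The alphabet `{a, b, c, a⁻¹, b⁻¹, c⁻¹}` of the braid group `B₃`. -/
inductive B3Letter : Type
  | a | b | c | ai | bi | ci
deriving DecidableEq

open B3Letter

/-- The rewriting system for `B₃ = Gp⟨a, b, c | a³ = b² = c⟩` from Pedersen et al. -/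
def B3System : Set (List B3Letter × List B3Letter) :=
  {([ai], [ci, a, a]), ([bi], [ci, b]), ([a, a, a], [c]), ([b, b], [c]),
   ([a, c], [c, a]), ([a, ci], [ci, a]), ([b, c], [c, b]), ([b, ci], [ci, b]),
   ([c, ci], []), ([ci, c], [])}

/-!
The letter `c` is central and `B₃ / ⟨c⟩ ≅ ℤ/3 ∗ ℤ/2`, so every element of `B₃` is
`c ^ k * w` with `k : ℤ` and `w` a word in `a, b` containing neither `aaa` nor `bb`. Letters act
on such pairs `(k, w)` by left multiplication, and the two sides of every rule act in the same
way. A word `x c^k w` rewrites to the normal word of `x * c ^ k * w`, so by induction every word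
rewrites to the normal word of its value, while rewriting does not change the value. Hence any
two reducts of a word rewrite to a common word.
-/

theorem List.exists_eq_replicate_append {α : Type*} (x : α) (w : List α) :
    ∃ j s, w = List.replicate j x ++ s ∧ ¬ [x] <+: s := by
  induction w with
  | nil => exact ⟨0, [], rfl, by simp⟩
  | cons y t ih =>
    by_cases hy : y = x
    · obtain ⟨j, s, rfl, hs⟩ := ih
      exact ⟨j + 1, s, by simp [hy, List.replicate_succ], hs⟩
    · exact ⟨0, y :: t, rfl, by simp [Ne.symm hy]⟩

namespace RWStep

variable {α : Type*} {R : Set (List α × List α)} {l r u v : List α}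

theorem of_mem (h : (l, r) ∈ R) : RWStep R l r :=
  ⟨[], l, r, [], h, by simp, by simp⟩

theorem append_left (h : RWStep R u v) (p : List α) : RWStep R (p ++ u) (p ++ v) := by
  obtain ⟨x, l, r, y, hR, rfl, rfl⟩ := h
  exact ⟨p ++ x, l, r, y, hR, by simp, by simp⟩

theorem append_right (h : RWStep R u v) (q : List α) : RWStep R (u ++ q) (v ++ q) := by
  obtain ⟨x, l, r, y, hR, rfl, rfl⟩ := h
  exact ⟨x, l, r, y ++ q, hR, by simp, by simp⟩

theorem reflTransGen_append_left (h : ReflTransGen (RWStep R) u v) (p : List α) :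
    ReflTransGen (RWStep R) (p ++ u) (p ++ v) :=
  h.lift (p ++ ·) fun _ _ h ↦ h.append_left p

theorem reflTransGen_append_right (h : ReflTransGen (RWStep R) u v) (q : List α) :
    ReflTransGen (RWStep R) (u ++ q) (v ++ q) :=
  h.lift (· ++ q) fun _ _ h ↦ h.append_right q

theorem reflTransGen_cons_replicate {x y : α} (h : ([x, y], [y, x]) ∈ R) (n : ℕ) :
    ReflTransGen (RWStep R) (x :: List.replicate n y) (List.replicate n y ++ [x]) := by
  induction n with
  | zero => rfl
  | succ n ih =>
    exact .head ((of_mem h).append_right (List.replicate n y))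
      (reflTransGen_append_left ih [y])

end RWStep

structure RWNormalFormModel {α : Type*} (R : Set (List α × List α)) (S : Type*) where
  act : α → S → S
  toWord : S → List α
  IsNormal : S → Prop
  one : S
  toWord_one : toWord one = []
  isNormal_one : IsNormal one
  isNormal_act : ∀ x s, IsNormal s → IsNormal (act x s)
  reflTransGen_toWord_act : ∀ x s, ReflTransGen (RWStep R) (x :: toWord s) (toWord (act x s))
  foldr_act_eq : ∀ l r, (l, r) ∈ R → ∀ s, IsNormal s → l.foldr act s = r.foldr act s

namespace RWNormalFormModel

variable {α S : Type*} {R : Set (List α × List α)} (M : RWNormalFormModel R S)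

def eval (w : List α) : S := w.foldr M.act M.one

theorem isNormal_foldr {s : S} (hs : M.IsNormal s) (w : List α) :
    M.IsNormal (w.foldr M.act s) := by
  induction w with
  | nil => exact hs
  | cons x w ih => exact M.isNormal_act x _ ih

theorem reflTransGen_toWord_eval (w : List α) :
    ReflTransGen (RWStep R) w (M.toWord (M.eval w)) := by
  induction w with
  | nil => rw [eval, List.foldr_nil, M.toWord_one]
  | cons x w ih =>
    exact (RWStep.reflTransGen_append_left ih [x]).trans (M.reflTransGen_toWord_act x _)

theorem eval_eq_of_rwStep {u v : List α} (h : RWStep R u v) : M.eval u = M.eval v := by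
  obtain ⟨p, l, r, q, hR, rfl, rfl⟩ := h
  simp only [eval, List.foldr_append]
  rw [M.foldr_act_eq l r hR _ (M.isNormal_foldr M.isNormal_one q)]

theorem eval_eq_of_reflTransGen {u v : List α} (h : ReflTransGen (RWStep R) u v) :
    M.eval u = M.eval v := by
  induction h with
  | refl => rfl
  | tail _ hstep ih => exact ih.trans (M.eval_eq_of_rwStep hstep)

theorem join (M : RWNormalFormModel R S) {w u v : List α} (hu : ReflTransGen (RWStep R) w u)
    (hv : ReflTransGen (RWStep R) w v) :
    Join (ReflTransGen (RWStep R)) u v :=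
  ⟨M.toWord (M.eval w),
    M.eval_eq_of_reflTransGen hu ▸ M.reflTransGen_toWord_eval u,
    M.eval_eq_of_reflTransGen hv ▸ M.reflTransGen_toWord_eval v⟩

end RWNormalFormModel

namespace B3System

def cPow : ℤ → List B3Letter
  | .ofNat n => List.replicate n c
  | .negSucc n => List.replicate (n + 1) ci

theorem cPow_natCast (n : ℕ) : cPow n = List.replicate n c := rfl

theorem cPow_neg_natCast (n : ℕ) : cPow (-n) = List.replicate n ci := by
  cases n <;> rfl

theorem rwStep (l r q : List B3Letter) (h : (l, r) ∈ B3System := by simp [B3System]) :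
    RWStep B3System (l ++ q) (r ++ q) :=
  (RWStep.of_mem h).append_right q

theorem reflTransGen_c_cons_cPow (k : ℤ) :
    ReflTransGen (RWStep B3System) (c :: cPow k) (cPow (k + 1)) := by
  obtain ⟨n, rfl | rfl⟩ := k.eq_nat_or_neg
  · rw [← Nat.cast_succ, cPow_natCast, cPow_natCast, List.replicate_succ]
  · cases n with
    | zero => rfl
    | succ n =>
      rw [show -((n + 1 : ℕ) : ℤ) + 1 = -n by push_cast; ring, cPow_neg_natCast,
        cPow_neg_natCast]
      exact .single (rwStep [c, ci] [] _)

theorem reflTransGen_ci_cons_cPow (k : ℤ) :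
    ReflTransGen (RWStep B3System) (ci :: cPow k) (cPow (k - 1)) := by
  obtain ⟨n, rfl | rfl⟩ := k.eq_nat_or_neg
  · cases n with
    | zero => rfl
    | succ n =>
      rw [show ((n + 1 : ℕ) : ℤ) - 1 = n by push_cast; ring, cPow_natCast, cPow_natCast]
      exact .single (rwStep [ci, c] [] _)
  · rw [show -(n : ℤ) - 1 = -((n + 1 : ℕ) : ℤ) by push_cast; ring, cPow_neg_natCast,
      cPow_neg_natCast, List.replicate_succ]

theorem reflTransGen_cPow_append_c (k : ℤ) :
    ReflTransGen (RWStep B3System) (cPow k ++ [c]) (cPow (k + 1)) := by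
  obtain ⟨n, rfl | rfl⟩ := k.eq_nat_or_neg
  · rw [← Nat.cast_succ, cPow_natCast, cPow_natCast, List.replicate_succ']
  · cases n with
    | zero => rfl
    | succ n =>
      rw [show -((n + 1 : ℕ) : ℤ) + 1 = -n by push_cast; ring, cPow_neg_natCast,
        cPow_neg_natCast, List.replicate_succ']
      exact .single (by simpa using (rwStep [ci, c] [] []).append_left (List.replicate n ci))

theorem reflTransGen_cons_cPow {x : B3Letter} (hc : ([x, c], [c, x]) ∈ B3System)
    (hci : ([x, ci], [ci, x]) ∈ B3System) (k : ℤ) :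
    ReflTransGen (RWStep B3System) (x :: cPow k) (cPow k ++ [x]) := by
  obtain ⟨n, rfl | rfl⟩ := k.eq_nat_or_neg
  · exact RWStep.reflTransGen_cons_replicate hc n
  · rw [cPow_neg_natCast]
    exact RWStep.reflTransGen_cons_replicate hci n

def shift (m : ℤ) (p : ℤ × List B3Letter) : ℤ × List B3Letter := (p.1 + m, p.2)

/-- Left multiplication by a letter `x` with `x ^ (n + 1) = c`. -/
def mulRoot (x : B3Letter) (n : ℕ) (p : ℤ × List B3Letter) : ℤ × List B3Letter :=
  if List.replicate n x <+: p.2 then (p.1 + 1, p.2.drop n) else (p.1, x :: p.2)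

theorem mulRoot_shift (x : B3Letter) (n : ℕ) (m : ℤ) (p : ℤ × List B3Letter) :
    mulRoot x n (shift m p) = shift m (mulRoot x n p) := by
  unfold mulRoot shift
  split_ifs
  · simp only [Prod.mk.injEq, and_true]
    ring
  · rfl

theorem mulRoot_replicate_append_of_lt {x : B3Letter} {n j : ℕ} {s : List B3Letter}
    (hs : ¬ [x] <+: s) (hj : j < n) (k : ℤ) :
    mulRoot x n (k, List.replicate j x ++ s) = (k, List.replicate (j + 1) x ++ s) := by
  have hpre : ¬ List.replicate n x <+: List.replicate j x ++ s := by
    obtain ⟨i, rfl⟩ := Nat.exists_eq_add_of_lt hj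
    rw [Nat.add_assoc, List.replicate_add, List.prefix_append_right_inj, List.replicate_succ]
    exact fun h ↦ hs ((List.prefix_append [x] _).trans h)
  simp [mulRoot, hpre, List.replicate_succ]

theorem mulRoot_replicate_append (x : B3Letter) (n : ℕ) (s : List B3Letter) (k : ℤ) :
    mulRoot x n (k, List.replicate n x ++ s) = (k + 1, s) := by
  simp [mulRoot, List.drop_left' (List.length_replicate (n := n) (a := x))]

theorem mulRoot_iterate_replicate_append {x : B3Letter} {n j : ℕ} {s : List B3Letter}
    (hs : ¬ [x] <+: s) (k : ℤ) {i : ℕ} (hij : i + j ≤ n) :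
    (mulRoot x n)^[i] (k, List.replicate j x ++ s) = (k, List.replicate (i + j) x ++ s) := by
  induction i with
  | zero => simp
  | succ i ih =>
    rw [Function.iterate_succ_apply', ih (by omega),
      mulRoot_replicate_append_of_lt hs (by omega), Nat.add_right_comm]

theorem mulRoot_iterate {x : B3Letter} {n : ℕ} {w : List B3Letter}
    (hw : ¬ List.replicate (n + 1) x <+: w) (k : ℤ) :
    (mulRoot x n)^[n + 1] (k, w) = (k + 1, w) := by
  obtain ⟨j, s, rfl, hs⟩ := List.exists_eq_replicate_append x w
  have hj : j ≤ n := by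
    by_contra! hj
    obtain ⟨i, rfl⟩ := Nat.exists_eq_add_of_lt hj
    rw [show n + i + 1 = n + 1 + i by omega, List.replicate_add (n + 1) i,
      List.append_assoc] at hw
    exact hw (List.prefix_append _ _)
  obtain ⟨i, rfl⟩ := Nat.exists_eq_add_of_le hj
  rw [show j + i + 1 = j + (1 + i) by omega, Function.iterate_add_apply,
    Function.iterate_add_apply, mulRoot_iterate_replicate_append hs k (by omega),
    show i + j = j + i by omega, Function.iterate_one, mulRoot_replicate_append]
  simpa using mulRoot_iterate_replicate_append (j := 0) hs (k + 1) (i := j) (by omega)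

/-- The pair `(k, w)` stands for `c ^ k * w`. -/
def toWord (p : ℤ × List B3Letter) : List B3Letter := cPow p.1 ++ p.2

def IsReduced (w : List B3Letter) : Prop := ¬ [a, a, a] <:+: w ∧ ¬ [b, b] <:+: w

theorem isReduced_mulRoot {x : B3Letter} {n : ℕ} (hxn : x = a ∧ n = 2 ∨ x = b ∧ n = 1)
    {p : ℤ × List B3Letter} (hp : IsReduced p.2) : IsReduced (mulRoot x n p).2 := by
  unfold mulRoot
  split_ifs with h
  · have hsuf := (List.drop_suffix n p.2).isInfix
    exact ⟨fun h' ↦ hp.1 (h'.trans hsuf), fun h' ↦ hp.2 (h'.trans hsuf)⟩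
  · rcases hxn with ⟨rfl, rfl⟩ | ⟨rfl, rfl⟩ <;>
      simp_all [IsReduced, List.infix_cons_iff, List.replicate_succ]

theorem reflTransGen_cons_toWord_mulRoot {x : B3Letter} {n : ℕ}
    (hxn : (List.replicate (n + 1) x, [c]) ∈ B3System) (hc : ([x, c], [c, x]) ∈ B3System)
    (hci : ([x, ci], [ci, x]) ∈ B3System) (p : ℤ × List B3Letter) :
    ReflTransGen (RWStep B3System) (x :: toWord p) (toWord (mulRoot x n p)) := by
  obtain ⟨k, w⟩ := p
  have hmove : ReflTransGen (RWStep B3System) (x :: toWord (k, w)) (cPow k ++ x :: w) := by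
    simpa [toWord] using RWStep.reflTransGen_append_right (reflTransGen_cons_cPow hc hci k) w
  unfold mulRoot
  split_ifs with h
  · obtain ⟨s, rfl⟩ := h
    have hstep :
        RWStep B3System (cPow k ++ List.replicate (n + 1) x ++ s) (cPow k ++ [c] ++ s) :=
      ⟨_, _, _, _, hxn, rfl, rfl⟩
    refine hmove.trans (.head (by simpa [List.replicate_succ] using hstep) ?_)
    simpa [toWord] using RWStep.reflTransGen_append_right (reflTransGen_cPow_append_c k) s
  · exact hmove

def mul : B3Letter → ℤ × List B3Letter → ℤ × List B3Letter
  | a, p => mulRoot a 2 p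
  | b, p => mulRoot b 1 p
  | c, p => shift 1 p
  | ci, p => shift (-1) p
  | ai, p => shift (-1) (mulRoot a 2 (mulRoot a 2 p))
  | bi, p => shift (-1) (mulRoot b 1 p)

theorem isReduced_mul (x : B3Letter) {p : ℤ × List B3Letter} (hp : IsReduced p.2) :
    IsReduced (mul x p).2 := by
  have ha {q : ℤ × List B3Letter} (hq : IsReduced q.2) :=
    isReduced_mulRoot (.inl ⟨rfl, rfl⟩) hq
  have hb {q : ℤ × List B3Letter} (hq : IsReduced q.2) :=
    isReduced_mulRoot (.inr ⟨rfl, rfl⟩) hq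
  cases x with
  | a => exact ha hp
  | b => exact hb hp
  | c | ci => exact hp
  | ai => exact ha (ha hp)
  | bi => exact hb hp

theorem reflTransGen_cons_toWord_mul (x : B3Letter) (p : ℤ × List B3Letter) :
    ReflTransGen (RWStep B3System) (x :: toWord p) (toWord (mul x p)) := by
  have ha := reflTransGen_cons_toWord_mulRoot (x := a) (n := 2)
    (by simp [B3System]) (by simp [B3System]) (by simp [B3System])
  have hb := reflTransGen_cons_toWord_mulRoot (x := b) (n := 1)
    (by simp [B3System]) (by simp [B3System]) (by simp [B3System])
  have hc (q : ℤ × List B3Letter) :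
      ReflTransGen (RWStep B3System) (c :: toWord q) (toWord (shift 1 q)) :=
    RWStep.reflTransGen_append_right (reflTransGen_c_cons_cPow q.1) q.2
  have hci (q : ℤ × List B3Letter) :
      ReflTransGen (RWStep B3System) (ci :: toWord q) (toWord (shift (-1) q)) :=
    RWStep.reflTransGen_append_right (reflTransGen_ci_cons_cPow q.1) q.2
  cases x with
  | a => exact ha p
  | b => exact hb p
  | c => exact hc p
  | ci => exact hci p
  | ai =>
    have haa := (RWStep.reflTransGen_append_left (ha p) [a]).trans (ha _)
    exact .head (rwStep [ai] [ci, a, a] _)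
      ((RWStep.reflTransGen_append_left haa [ci]).trans (hci _))
  | bi =>
    exact .head (rwStep [bi] [ci, b] _)
      ((RWStep.reflTransGen_append_left (hb p) [ci]).trans (hci _))

theorem foldr_mul_eq {l r : List B3Letter} (h : (l, r) ∈ B3System) {p : ℤ × List B3Letter}
    (hp : IsReduced p.2) : l.foldr mul p = r.foldr mul p := by
  simp only [B3System, Set.mem_insert_iff, Set.mem_singleton_iff, Prod.mk.injEq] at h
  rcases h with ⟨rfl, rfl⟩ | ⟨rfl, rfl⟩ | ⟨rfl, rfl⟩ | ⟨rfl, rfl⟩ | ⟨rfl, rfl⟩ |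
    ⟨rfl, rfl⟩ | ⟨rfl, rfl⟩ | ⟨rfl, rfl⟩ | ⟨rfl, rfl⟩ | ⟨rfl, rfl⟩
  · rfl
  · rfl
  · exact mulRoot_iterate (n := 2) (fun h ↦ hp.1 h.isInfix) p.1
  · exact mulRoot_iterate (n := 1) (fun h ↦ hp.2 h.isInfix) p.1
  · exact mulRoot_shift a 2 1 p
  · exact mulRoot_shift a 2 (-1) p
  · exact mulRoot_shift b 1 1 p
  · exact mulRoot_shift b 1 (-1) p
  · simp [mul, shift]
  · simp [mul, shift]

def normalFormModel : RWNormalFormModel B3System (ℤ × List B3Letter) where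
  act := mul
  toWord := toWord
  IsNormal p := IsReduced p.2
  one := (0, [])
  toWord_one := rfl
  isNormal_one := by simp [IsReduced]
  isNormal_act _ _ := isReduced_mul _
  reflTransGen_toWord_act := reflTransGen_cons_toWord_mul
  foldr_act_eq _ _ h _ := foldr_mul_eq h

end B3System

/-- The rewriting system `B3System` is locally confluent: all critical pairs resolve. -/
theorem B3System_locally_confluent :
    ∀ w u v : List B3Letter, RWStep B3System w u → RWStep B3System w v →
      ∃ z, Relation.ReflTransGen (RWStep B3System) u z ∧
        Relation.ReflTransGen (RWStep B3System) v z :=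
  fun _ _ _ hu hv ↦ B3System.normalFormModel.join (.single hu) (.single hv)
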